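/- arXiv:2204.11342 — 2 statements merged into one kernel-verified Lean document; each statement's English description precedes it below -/
import Mathlib

section
/- Let N ≥ 1 be an integer and let p ∈ [1,∞). There exists a constant C > 0 such that for every ρ > 0, ∫_{{z ∈ ℝ^N : |z| < ρ}} (1 + |log |z||)^p dz ≤ C ρ^N (1 + |log ρ|)^p, where the integral is with respect to Lebesgue measure on ℝ^N. -/
open MeasureTheory Real Set Pointwise
open scoped ENNReal

noncomputable section

/-- Euclidean space ℝ^N. -/
abbrev Euc (N : ℕ) : Type := EuclideanSpace ℝ (Fin N)

/-- The self-similarity exponent θ := α/(2β). -/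
def thetaV (α β : ℝ) : ℝ := α / (2 * β)

/-- σ* := 1 - α + Nθ. -/
def sigmaStar (N : ℕ) (α β : ℝ) : ℝ := 1 - α + (N : ℝ) * thetaV α β

/-- σ(p) := σ* - Nθ/p (with σ(∞) = σ*, since (∞ : ℝ≥0∞).toReal = 0 and x/0 = 0). -/
def sigmaP (N : ℕ) (α β : ℝ) (p : ℝ≥0∞) : ℝ :=
  sigmaStar N α β - (N : ℝ) * thetaV α β / p.toReal

/-- p ∈ [1,∞] is subcritical: p arbitrary if N < 2β, p < ∞ if N = 2β,
and p < p_c := N/(N-2β) if N > 2β. -/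
def Subcritical (N : ℕ) (β : ℝ) (p : ℝ≥0∞) : Prop :=
  ((N : ℝ) < 2 * β) ∨ ((N : ℝ) = 2 * β ∧ p ≠ ∞) ∨
    (2 * β < (N : ℝ) ∧ p < ENNReal.ofReal ((N : ℝ) / ((N : ℝ) - 2 * β)))

/-- The kernel Y(x,t) := t^{-σ*} G(x t^{-θ}). -/
def kernelY (N : ℕ) (α β : ℝ) (G : Euc N → ℝ) (x : Euc N) (t : ℝ) : ℝ :=
  t ^ (-(sigmaStar N α β)) * G ((t ^ (-(thetaV α β))) • x)

/-- The mild solution given by Duhamel's formula: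
u(x,t) = ∫₀^t ∫_{ℝ^N} Y(x-y,t-s) f(y,s) dy ds. -/
def mildSol (N : ℕ) (α β : ℝ) (G : Euc N → ℝ) (f : Euc N → ℝ → ℝ) (x : Euc N) (t : ℝ) : ℝ :=
  ∫ s in Ioo (0 : ℝ) t, ∫ y, kernelY N α β G (x - y) (t - s) * f y s

/-!
Writing `z = ρ w`, the triangle inequality `|log ‖z‖| ≤ |log ρ| + |log ‖w‖|` gives
`(1 + |log ‖z‖|) ^ p ≤ (1 + |log ρ|) ^ p (1 + |log ‖w‖|) ^ p`, and the change of variables turns the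
integral over the ball of radius `ρ` into `ρ ^ N` times the same integral over the unit ball. The
latter is finite: in polar coordinates it is at most `∫₀¹ (1 + |log r|) ^ p dr`, and
`(1 + |log r|) ^ p ≤ C r ^ (-p / (p + 1))` on `(0, 1]` since `log` grows slower than any power.
-/

open Metric Module

theorem one_add_abs_add_le (a b : ℝ) : 1 + |a + b| ≤ (1 + |a|) * (1 + |b|) := by
  nlinarith [abs_add_le a b, abs_nonneg a, abs_nonneg b, mul_nonneg (abs_nonneg a) (abs_nonneg b)]

theorem one_add_abs_log_le_mul (x : ℝ) {r : ℝ} (hr : r ≠ 0) :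
    1 + |log x| ≤ (1 + |log r|) * (1 + |log (r⁻¹ * x)|) := by
  rcases eq_or_ne x 0 with rfl | hx
  · simp
  · calc 1 + |log x| = 1 + |log r + log (r⁻¹ * x)| := by
          rw [log_mul (inv_ne_zero hr) hx, log_inv, add_neg_cancel_left]
      _ ≤ _ := one_add_abs_add_le _ _

theorem one_add_abs_log_rpow_le_mul (x : ℝ) {r : ℝ} (hr : r ≠ 0) {p : ℝ} (hp : 0 ≤ p) :
    (1 + |log x|) ^ p ≤ (1 + |log r|) ^ p * (1 + |log (r⁻¹ * x)|) ^ p := by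
  rw [← mul_rpow (by positivity) (by positivity)]
  exact rpow_le_rpow (by positivity) (one_add_abs_log_le_mul x hr) hp

theorem one_add_abs_log_le_rpow_neg {y ε : ℝ} (hy₀ : 0 < y) (hy₁ : y ≤ 1) (hε : 0 < ε) :
    1 + |log y| ≤ (1 + ε⁻¹) * y ^ (-ε) := by
  have h_one : 1 ≤ y ^ (-ε) := one_le_rpow_of_pos_of_le_one_of_nonpos hy₀ hy₁ (by linarith)
  have h_log : |log y| ≤ y ^ (-ε) / ε := by
    rw [abs_of_nonpos (log_nonpos hy₀.le hy₁), ← log_inv, rpow_neg hy₀.le, ← inv_rpow hy₀.le]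
    exact log_le_rpow_div (by positivity) hε
  rw [div_eq_mul_inv] at h_log
  nlinarith

theorem integrableOn_one_add_abs_log_rpow {p : ℝ} (hp : 0 ≤ p) :
    IntegrableOn (fun y ↦ (1 + |log y|) ^ p) (Ioo 0 1) := by
  set ε := (p + 1)⁻¹
  have hε : 0 < ε := by positivity
  have h_dom : IntegrableOn (fun y : ℝ ↦ (1 + ε⁻¹) ^ p * y ^ (-(ε * p))) (Ioo 0 1) := by
    refine Integrable.const_mul ((intervalIntegral.integrableOn_Ioo_rpow_iff one_pos).2 ?_) _
    have : ε * p < 1 := by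
      rw [inv_mul_lt_iff₀ (by positivity)]
      linarith
    linarith
  refine h_dom.mono' (by fun_prop) ((ae_restrict_iff' measurableSet_Ioo).2 (.of_forall ?_))
  rintro y ⟨hy₀, hy₁⟩
  rw [norm_of_nonneg (by positivity), ← neg_mul, rpow_mul hy₀.le,
    ← mul_rpow (by positivity) (by positivity)]
  exact rpow_le_rpow (by positivity) (one_add_abs_log_le_rpow_neg hy₀ hy₁.le hε) hp

section

variable {E : Type*} [NormedAddCommGroup E] [NormedSpace ℝ E] [FiniteDimensional ℝ E]
  [MeasurableSpace E] [BorelSpace E] (μ : Measure E) [μ.IsAddHaarMeasure]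

theorem integrableOn_ball_one_add_abs_log_norm_rpow [Nontrivial E] {p : ℝ} (hp : 0 ≤ p) :
    IntegrableOn (fun x : E ↦ (1 + |log ‖x‖|) ^ p) (ball 0 1) μ := by
  rw [integrableOn_fun_norm_addHaar μ (f := fun y ↦ (1 + |log y|) ^ p)]
  refine (integrableOn_one_add_abs_log_rpow hp).mono' (by fun_prop)
    ((ae_restrict_iff' measurableSet_Ioo).2 (.of_forall ?_))
  rintro y ⟨hy₀, hy₁⟩
  rw [smul_eq_mul, norm_mul, norm_of_nonneg (by positivity), norm_of_nonneg (by positivity)]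
  exact mul_le_of_le_one_left (by positivity) (pow_le_one₀ hy₀.le hy₁.le)

theorem setLIntegral_ball_comp_inv_smul {f : E → ℝ≥0∞} (hf : Measurable f) {r : ℝ} (hr : 0 < r) :
    ∫⁻ x in ball 0 r, f (r⁻¹ • x) ∂μ =
      ENNReal.ofReal (r ^ finrank ℝ E) * ∫⁻ y in ball 0 1, f y ∂μ := by
  have h_map : μ.map (r⁻¹ • ·) = ENNReal.ofReal (r ^ finrank ℝ E) • μ := by
    rw [Measure.map_addHaar_smul μ (inv_ne_zero hr.ne'), inv_pow, inv_inv,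
      abs_of_pos (by positivity)]
  have h_preimage : (r⁻¹ • ·) ⁻¹' ball (0 : E) 1 = ball 0 r := by
    ext x
    simp [norm_smul, abs_of_pos hr, inv_mul_lt_iff₀ hr]
  rw [← h_preimage, ← setLIntegral_map measurableSet_ball hf (measurable_const_smul _), h_map,
    Measure.restrict_smul, lintegral_smul_measure, smul_eq_mul]

end

theorem log_integral_ball (N : ℕ) (hN : 1 ≤ N) (p : ℝ) (hp : 1 ≤ p) :
    ∃ C : ℝ, 0 < C ∧ ∀ ρ : ℝ, 0 < ρ →
      (∫⁻ z in Metric.ball (0 : EuclideanSpace ℝ (Fin N)) ρ,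
          ENNReal.ofReal ((1 + |Real.log ‖z‖|) ^ p)) ≤
        ENNReal.ofReal (C * ρ ^ (N : ℝ) * (1 + |Real.log ρ|) ^ p) := by
  have : Nontrivial (EuclideanSpace ℝ (Fin N)) :=
    finrank_pos_iff.1 (by rwa [finrank_euclideanSpace_fin])
  set g : EuclideanSpace ℝ (Fin N) → ℝ≥0∞ := fun z ↦ ENNReal.ofReal ((1 + |log ‖z‖|) ^ p)
  have hg : Measurable g := by fun_prop
  set I := ∫⁻ z in ball 0 1, g z
  have hI : I ≠ ∞ :=
    (integrableOn_ball_one_add_abs_log_norm_rpow volume (by linarith)).lintegral_lt_top.ne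
  refine ⟨I.toReal + 1, by positivity, fun ρ hρ ↦ ?_⟩
  set A := (1 + |log ρ|) ^ p
  have h_pointwise (z : EuclideanSpace ℝ (Fin N)) : g z ≤ ENNReal.ofReal A * g (ρ⁻¹ • z) := by
    rw [← ENNReal.ofReal_mul (by positivity), norm_smul, norm_inv, norm_of_nonneg hρ.le]
    exact ENNReal.ofReal_le_ofReal (one_add_abs_log_rpow_le_mul _ hρ.ne' (by linarith))
  calc ∫⁻ z in ball 0 ρ, g z
      ≤ ∫⁻ z in ball 0 ρ, ENNReal.ofReal A * g (ρ⁻¹ • z) := lintegral_mono h_pointwise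
    _ = ENNReal.ofReal A * (ENNReal.ofReal (ρ ^ N) * I) := by
      rw [lintegral_const_mul' _ _ ENNReal.ofReal_ne_top,
        setLIntegral_ball_comp_inv_smul volume hg hρ, finrank_euclideanSpace_fin]
    _ ≤ ENNReal.ofReal A * (ENNReal.ofReal (ρ ^ N) * ENNReal.ofReal (I.toReal + 1)) := by
      gcongr
      rw [ENNReal.le_ofReal_iff_toReal_le hI (by positivity)]
      linarith
    _ = ENNReal.ofReal ((I.toReal + 1) * ρ ^ (N : ℝ) * A) := by
      rw [← ENNReal.ofReal_mul (by positivity), ← ENNReal.ofReal_mul (by positivity), rpow_natCast]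
      ring_nf
end
end

section
/- Suppose N ≥ 2β. Let γ ∈ ℝ and take the specific forcing term f(x,t) := (1+t)^{-γ} 𝟙_{B_1(0)}(x). Then there exist c > 0, δ ∈ (0,1) and T ≥ 2 such that for all t ≥ T and all x with 1 < |x| ≤ δ t^θ, the mild solution u satisfies: u(x,t) ≥ c t^{-γ} log(t^θ/|x|) if N = 2β, and u(x,t) ≥ c t^{-γ} |x|^{2β-N} if 2β < N ≤ 4β (note (1-σ*)/θ = 2β - N). -/
/-!
Write `u(x,t) = ∫₀ᵗ g(s) ds` with `g(s) = ∫ Y(x-y,t-s) f(y,s) dy ≥ 0`. Since `|x| > 1` and `f`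
lives on `B₁`, the kernel is only evaluated at `|z| ≥ |x| - 1 > 0`; there continuity of `G` and
its decay `G(ξ) ≲ |ξ|^{-(N+2β)}` give `Y(z,τ) ≲ τ^{2α-1}`, an integrable singularity, so the
Duhamel integrand is integrable and `u` is a genuine integral of `g`.

For `t - s = τ ∈ [a,b]` with `a = (2|x|)^{1/θ}` and `b ≤ t/2`, every `y ∈ B₁` has
`|x - y| ≤ τ^θ`, so the lower bound `G ≥ c₁` on the unit ball gives `Y ≥ c₁ τ^{-σ*}`, while
`(1+s)^{-γ} ≥ 2^{-|γ|} t^{-γ}`. Hence `u ≳ t^{-γ} ∫_a^b τ^{-σ*} dτ`. If `N = 2β` then `σ* = 1`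
and `b = t/2` yields `log (t/(2a)) ≳ log (t^θ/|x|)`; if `N > 2β`, `b = 2a` yields
`a^{1-σ*} ≍ |x|^{(1-σ*)/θ} = |x|^{2β-N}`.
-/

open MeasureTheory Real Set Pointwise
open scoped ENNReal

noncomputable section

theorem two_rpow_neg_abs_le_rpow (γ : ℝ) {r : ℝ} (h₁ : 1 / 2 ≤ r) (h₂ : r ≤ 2) :
    (2 : ℝ) ^ (-|γ|) ≤ r ^ γ := by
  have hr : 0 < r := by linarith
  have hlog : |log r| ≤ log 2 := by
    refine abs_le.2 ⟨?_, log_le_log hr h₂⟩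
    rw [← log_inv, ← one_div]
    exact log_le_log (by norm_num) h₁
  rw [rpow_def_of_pos two_pos, rpow_def_of_pos hr, exp_le_exp]
  calc log 2 * -|γ| ≤ -(|log r| * |γ|) := by
        rw [mul_neg, neg_le_neg_iff]
        exact mul_le_mul_of_nonneg_right hlog (abs_nonneg γ)
    _ ≤ log r * γ := by
        rw [← abs_mul]
        exact neg_abs_le _

theorem two_rpow_neg_abs_mul_rpow_le (γ : ℝ) {t u : ℝ} (ht : 0 < t) (h₁ : t / 2 ≤ u)
    (h₂ : u ≤ 2 * t) : (2 : ℝ) ^ (-|γ|) * t ^ (-γ) ≤ u ^ (-γ) := by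
  have hu : u = t * (u / t) := by field_simp
  rw [hu, mul_rpow ht.le (div_nonneg (by linarith) ht.le), mul_comm]
  refine mul_le_mul_of_nonneg_left ?_ (rpow_nonneg ht.le _)
  rw [← abs_neg γ]
  exact two_rpow_neg_abs_le_rpow _ (by rw [le_div_iff₀ ht]; linarith)
    (by rw [div_le_iff₀ ht]; linarith)

theorem integrableOn_sub_rpow {a t : ℝ} (ha : -1 < a) (ht : 0 ≤ t) :
    IntegrableOn (fun s => (t - s) ^ a) (Ioo 0 t) := by
  have h := (intervalIntegral.intervalIntegrable_rpow' ha (a := 0) (b := t)).comp_sub_left t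
  rw [sub_zero, sub_self] at h
  exact (intervalIntegrable_iff_integrableOn_Ioc_of_le ht).1 h.symm |>.mono_set Ioo_subset_Ioc_self

theorem mul_rpow_le_intervalIntegral_rpow {a σ : ℝ} (ha : 0 < a) (hσ : 0 ≤ σ) :
    a * (2 * a) ^ (-σ) ≤ ∫ τ in a..2 * a, τ ^ (-σ) := by
  have hmono : ∫ _ in a..2 * a, (2 * a) ^ (-σ) ≤ ∫ τ in a..2 * a, τ ^ (-σ) := by
    refine intervalIntegral.integral_mono_on (by linarith) intervalIntegrable_const ?_
      fun τ hτ => rpow_le_rpow_of_nonpos (ha.trans_le hτ.1) hτ.2 (neg_nonpos.2 hσ)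
    exact intervalIntegral.intervalIntegrable_rpow (Or.inr (notMem_uIcc_of_lt ha (by linarith)))
  rw [intervalIntegral.integral_const, smul_eq_mul] at hmono
  linarith

theorem rpow_inv_le_div_four {θ t r : ℝ} (hθ : 0 < θ) (ht : 0 < t) (hr : 0 ≤ r)
    (hrt : r ≤ 4 ^ (-(1 + θ)) * t ^ θ) : (2 * r) ^ θ⁻¹ ≤ t / 4 := by
  rw [rpow_inv_le_iff_of_pos (by positivity) (by positivity) hθ]
  calc 2 * r ≤ 2 * (4 ^ (-(1 + θ)) * t ^ θ) := by linarith
    _ = (t / 4) ^ θ / 2 := by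
        rw [neg_add, rpow_add (by norm_num), rpow_neg_one, rpow_neg (by norm_num),
          div_rpow ht.le (by norm_num)]
        ring
    _ ≤ (t / 4) ^ θ := half_le_self (by positivity)

theorem log_div_two_mul_le_log {θ t r : ℝ} (hθ : 0 < θ) (ht : 0 < t) (hr : 0 < r)
    (hrt : r ≤ 4 ^ (-(1 + θ)) * t ^ θ) :
    log (t ^ θ / r) / (2 * θ) ≤ log (t / 2 / (2 * r) ^ θ⁻¹) := by
  have hL : (1 + θ) * log 4 ≤ log (t ^ θ / r) := by
    rw [← log_rpow (by norm_num)]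
    refine log_le_log (by positivity) ?_
    rw [rpow_neg (by norm_num), inv_mul_eq_div, le_div_iff₀ (by positivity)] at hrt
    rw [le_div_iff₀ hr]
    linarith
  have hlog4 : log 4 = 2 * log 2 := by
    rw [show (4 : ℝ) = 2 ^ 2 by norm_num, log_pow]
    norm_num
  have key : θ * log (t / 2 / (2 * r) ^ θ⁻¹) = log (t ^ θ / r) - (1 + θ) * log 2 := by
    rw [log_div (by positivity) (by positivity), log_div ht.ne' two_ne_zero,
      log_rpow (by positivity), log_mul two_ne_zero hr.ne', log_div (by positivity) hr.ne',
      log_rpow ht]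
    field_simp
    ring
  rw [div_le_iff₀ (by positivity)]
  nlinarith

theorem exists_le_mul_rpow_neg_of_continuousOn {E : Type*} [NormedAddCommGroup E] [ProperSpace E]
    {G : E → ℝ} {C k m : ℝ} (hG : ContinuousOn G {0}ᶜ) (hk : 0 ≤ k) (hm : 0 < m)
    (hout : ∀ ξ, 1 ≤ ‖ξ‖ → G ξ ≤ C * ‖ξ‖ ^ (-k)) :
    ∃ K, 0 ≤ K ∧ ∀ ξ, m ≤ ‖ξ‖ → G ξ ≤ K * ‖ξ‖ ^ (-k) := by
  have hannulus : Metric.closedBall (0 : E) 1 \ Metric.ball 0 m ⊆ {0}ᶜ := by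
    rintro ξ ⟨-, hξ⟩ rfl
    simp [hm] at hξ
  obtain ⟨M, hM⟩ := ((isCompact_closedBall (0 : E) 1).diff Metric.isOpen_ball)
    |>.exists_bound_of_continuousOn (hG.mono hannulus)
  refine ⟨max (max M C) 0, le_max_right _ _, fun ξ hξ => ?_⟩
  have hξ0 : 0 < ‖ξ‖ := hm.trans_le hξ
  rcases le_total ‖ξ‖ 1 with hξ1 | hξ1
  · calc G ξ ≤ max (max M C) 0 := by
          refine (le_abs_self _).trans ((hM ξ ⟨?_, ?_⟩).trans ?_)
          · simpa using hξ1
          · simpa using hξ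
          · exact (le_max_left _ _).trans (le_max_left _ _)
      _ ≤ max (max M C) 0 * ‖ξ‖ ^ (-k) :=
          le_mul_of_one_le_right (le_max_right _ _)
            (one_le_rpow_of_pos_of_le_one_of_nonpos hξ0 hξ1 (neg_nonpos.2 hk))
  · exact (hout ξ hξ1).trans (mul_le_mul_of_nonneg_right
      ((le_max_right _ _).trans (le_max_left _ _)) (rpow_nonneg hξ0.le _))

section Exponents

variable {N : ℕ} {α β : ℝ}

theorem sigmaStar_eq_one (hβ : β ≠ 0) (hN : (N : ℝ) = 2 * β) : sigmaStar N α β = 1 := by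
  rw [sigmaStar, thetaV, hN]
  field_simp
  ring

theorem one_le_sigmaStar (hα : 0 ≤ α) (hβ : 0 < β) (hN : 2 * β ≤ N) : 1 ≤ sigmaStar N α β := by
  have : α ≤ N * thetaV α β := by
    rw [thetaV, mul_div_assoc', le_div_iff₀ (by positivity)]
    nlinarith
  rw [sigmaStar]
  linarith

theorem one_sub_sigmaStar_mul_thetaV_inv (hα : α ≠ 0) (hβ : β ≠ 0) :
    (1 - sigmaStar N α β) * (thetaV α β)⁻¹ = 2 * β - N := by
  rw [sigmaStar, thetaV]
  field_simp
  ring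

end Exponents

section Kernel

variable {N : ℕ} {α β : ℝ} {G : Euc N → ℝ}

theorem measurable_kernelY (hG : ContinuousOn G {0}ᶜ) :
    Measurable (Function.uncurry (kernelY N α β G)) := by
  have := measurable_of_continuousOn_compl_singleton 0 hG
  unfold kernelY Function.uncurry
  fun_prop

theorem continuousOn_kernelY (hG : ContinuousOn G {0}ᶜ) {τ : ℝ} (hτ : 0 < τ) :
    ContinuousOn (kernelY N α β G · τ) {0}ᶜ :=
  continuousOn_const.mul <| hG.comp (continuous_const_smul _).continuousOn fun _ hz =>
    smul_ne_zero (rpow_pos_of_pos hτ _).ne' hz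

theorem kernelY_pos (hG : ∀ ξ : Euc N, ξ ≠ 0 → 0 < G ξ) {z : Euc N} {τ : ℝ} (hz : z ≠ 0)
    (hτ : 0 < τ) : 0 < kernelY N α β G z τ :=
  mul_pos (rpow_pos_of_pos hτ _) (hG _ (smul_ne_zero (rpow_pos_of_pos hτ _).ne' hz))

theorem mul_rpow_le_kernelY {c : ℝ} (hG : ∀ ξ : Euc N, ξ ≠ 0 → ‖ξ‖ ≤ 1 → c ≤ G ξ)
    {z : Euc N} {τ : ℝ} (hz : z ≠ 0) (hτ : 0 < τ) (hzτ : ‖z‖ ≤ τ ^ thetaV α β) :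
    c * τ ^ (-sigmaStar N α β) ≤ kernelY N α β G z τ := by
  have hξ : ‖τ ^ (-thetaV α β) • z‖ ≤ 1 := by
    rwa [norm_smul, norm_of_nonneg (rpow_nonneg hτ.le _), rpow_neg hτ.le, inv_mul_le_one₀
      (rpow_pos_of_pos hτ _)]
  rw [kernelY, mul_comm c]
  exact mul_le_mul_of_nonneg_left (hG _ (smul_ne_zero (rpow_pos_of_pos hτ _).ne' hz) hξ)
    (rpow_nonneg hτ.le _)

theorem kernelY_le_mul_rpow {K m : ℝ} (hβ : β ≠ 0)
    (hG : ∀ ξ : Euc N, m ≤ ‖ξ‖ → G ξ ≤ K * ‖ξ‖ ^ (-((N : ℝ) + 2 * β)))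
    {z : Euc N} {τ : ℝ} (hτ : 0 < τ) (hm : m ≤ τ ^ (-thetaV α β) * ‖z‖) :
    kernelY N α β G z τ ≤ K * ‖z‖ ^ (-((N : ℝ) + 2 * β)) * τ ^ (2 * α - 1) := by
  have hnorm : ‖τ ^ (-thetaV α β) • z‖ = τ ^ (-thetaV α β) * ‖z‖ := by
    rw [norm_smul, norm_of_nonneg (rpow_nonneg hτ.le _)]
  have hexp : -sigmaStar N α β + -thetaV α β * -((N : ℝ) + 2 * β) = 2 * α - 1 := by
    unfold sigmaStar thetaV; field_simp; ring
  calc kernelY N α β G z τ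
      ≤ τ ^ (-sigmaStar N α β) * (K * (τ ^ (-thetaV α β) * ‖z‖) ^ (-((N : ℝ) + 2 * β))) :=
        mul_le_mul_of_nonneg_left (hnorm ▸ hG _ (hnorm ▸ hm)) (rpow_nonneg hτ.le _)
    _ = K * ‖z‖ ^ (-((N : ℝ) + 2 * β)) * τ ^ (2 * α - 1) := by
        rw [mul_rpow (rpow_nonneg hτ.le _) (norm_nonneg _), ← rpow_mul hτ.le, ← hexp,
          rpow_add hτ]
        ring

theorem exists_kernelY_le_mul_rpow {C : ℝ} (hα : 0 < α) (hβ : 0 < β)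
    (hGcont : ContinuousOn G {0}ᶜ)
    (hGout : ∀ ξ : Euc N, 1 ≤ ‖ξ‖ → G ξ ≤ C * ‖ξ‖ ^ (-((N : ℝ) + 2 * β)))
    {ρ t : ℝ} (hρ : 0 < ρ) (ht : 0 < t) :
    ∃ B, ∀ τ ∈ Ioc 0 t, ∀ z : Euc N, ρ ≤ ‖z‖ → kernelY N α β G z τ ≤ B * τ ^ (2 * α - 1) := by
  have hθ : 0 ≤ thetaV α β := (div_pos hα (by positivity)).le
  obtain ⟨K, hK, hGK⟩ := exists_le_mul_rpow_neg_of_continuousOn hGcont (by positivity)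
    (mul_pos (rpow_pos_of_pos ht (-thetaV α β)) hρ) hGout
  refine ⟨K * ρ ^ (-((N : ℝ) + 2 * β)), fun τ ⟨hτ, hτt⟩ z hz => ?_⟩
  refine (kernelY_le_mul_rpow hβ.ne' hGK hτ ?_).trans ?_
  · exact mul_le_mul (rpow_le_rpow_of_nonpos hτ hτt (neg_nonpos.2 hθ)) hz hρ.le
      (rpow_nonneg hτ.le _)
  · exact mul_le_mul_of_nonneg_right (mul_le_mul_of_nonneg_left
      (rpow_le_rpow_of_nonpos hρ hz (neg_nonpos.2 (by positivity))) hK) (rpow_nonneg hτ.le _)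

theorem mul_measureReal_le_setIntegral_kernelY {c : ℝ} (hGcont : ContinuousOn G {0}ᶜ)
    (hGlow : ∀ ξ : Euc N, ξ ≠ 0 → ‖ξ‖ ≤ 1 → c ≤ G ξ) {x : Euc N} (hx : 1 < ‖x‖) {τ : ℝ}
    (hτ : 0 < τ) (hxτ : ‖x‖ + 1 ≤ τ ^ thetaV α β) :
    c * τ ^ (-sigmaStar N α β) * volume.real (Metric.ball (0 : Euc N) 1) ≤
      ∫ y in Metric.ball 0 1, kernelY N α β G (x - y) τ := by
  have hxy : ∀ y ∈ Metric.closedBall (0 : Euc N) 1, x - y ≠ 0 := fun y hy h => by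
    rw [mem_closedBall_zero_iff, ← sub_eq_zero.1 h] at hy
    linarith
  have hint : IntegrableOn (fun y => kernelY N α β G (x - y) τ) (Metric.closedBall 0 1) :=
    ((continuousOn_kernelY hGcont hτ).comp (continuous_const.sub continuous_id).continuousOn
      hxy).integrableOn_compact (isCompact_closedBall 0 1)
  refine setIntegral_ge_of_const_le_real measurableSet_ball measure_ball_lt_top.ne
    (fun y hy => ?_) (hint.mono_set Metric.ball_subset_closedBall)
  refine mul_rpow_le_kernelY hGlow (hxy y (Metric.ball_subset_closedBall hy)) hτ ?_
  have := norm_sub_le x y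
  rw [mem_ball_zero_iff] at hy
  linarith

end Kernel

def ballForcing (N : ℕ) (γ : ℝ) (y : Euc N) (s : ℝ) : ℝ :=
  (Metric.ball (0 : Euc N) 1).indicator (fun _ => (1 + s) ^ (-γ)) y

section Duhamel

variable {N : ℕ} {α β : ℝ} {G : Euc N → ℝ}

theorem integrable_kernelY_mul_forcing {C : ℝ} (hα : 0 < α) (hβ : 0 < β)
    (hGcont : ContinuousOn G {0}ᶜ) (hGpos : ∀ ξ : Euc N, ξ ≠ 0 → 0 < G ξ)
    (hGout : ∀ ξ : Euc N, 1 ≤ ‖ξ‖ → G ξ ≤ C * ‖ξ‖ ^ (-((N : ℝ) + 2 * β)))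
    {f : Euc N → ℝ → ℝ} (hf : Measurable fun p : ℝ × Euc N => f p.2 p.1) {x : Euc N}
    {t R A : ℝ} (ht : 0 < t) (hRx : R < ‖x‖)
    (hfA : ∀ s ∈ Ioo 0 t, ∀ y, |f y s| ≤ (Metric.ball 0 R).indicator (fun _ => A) y) :
    Integrable (fun p : ℝ × Euc N => kernelY N α β G (x - p.2) (t - p.1) * f p.2 p.1)
      ((volume.restrict (Ioo 0 t)).prod volume) := by
  obtain ⟨B, hB⟩ := exists_kernelY_le_mul_rpow hα hβ hGcont hGout (sub_pos.2 hRx) ht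
  have hdom : Integrable (fun p : ℝ × Euc N =>
      B * (t - p.1) ^ (2 * α - 1) * (Metric.ball 0 R).indicator (fun _ => A) p.2)
      ((volume.restrict (Ioo 0 t)).prod volume) :=
    ((integrableOn_sub_rpow (by linarith) ht.le).const_mul B).mul_prod
      ((integrableOn_const measure_ball_lt_top.ne).integrable_indicator measurableSet_ball)
  refine hdom.mono' ?_ ?_
  · exact (((measurable_kernelY hGcont).comp (f := fun p : ℝ × Euc N => (x - p.2, t - p.1))
      (by fun_prop)).mul hf).aestronglyMeasurable
  filter_upwards [Measure.quasiMeasurePreserving_fst.ae (ae_restrict_mem measurableSet_Ioo)]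
    with ⟨s, y⟩ hs
  have hτ : t - s ∈ Ioc 0 t := ⟨by linarith [hs.2], by linarith [hs.1]⟩
  have hf := hfA s hs y
  rw [norm_mul, norm_eq_abs, norm_eq_abs]
  by_cases hy : y ∈ Metric.ball 0 R
  · rw [indicator_of_mem hy] at hf ⊢
    have hxy : ‖x‖ - R ≤ ‖x - y‖ := by
      have := norm_sub_norm_le x y
      rw [mem_ball_zero_iff] at hy
      linarith
    have hY := kernelY_pos (α := α) (β := β) hGpos (norm_pos_iff.1 ((sub_pos.2 hRx).trans_le hxy))
      hτ.1
    rw [abs_of_pos hY]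
    exact mul_le_mul (hB _ hτ _ hxy) hf (abs_nonneg _) (hY.le.trans (hB _ hτ _ hxy))
  · rw [indicator_of_notMem hy] at hf ⊢
    simp [le_antisymm hf (abs_nonneg _)]

theorem measurable_ballForcing (γ : ℝ) :
    Measurable fun p : ℝ × Euc N => ballForcing N γ p.2 p.1 := by
  unfold ballForcing
  exact Measurable.ite (measurableSet_ball.preimage measurable_snd) (by fun_prop) measurable_const

theorem abs_ballForcing_le (γ : ℝ) {s t : ℝ} (hs : s ∈ Ioo 0 t) (y : Euc N) :
    |ballForcing N γ y s| ≤ (Metric.ball 0 1).indicator (fun _ => (1 + t) ^ |γ|) y := by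
  unfold ballForcing
  by_cases hy : y ∈ Metric.ball 0 1
  · rw [indicator_of_mem hy, indicator_of_mem hy,
      abs_of_pos (rpow_pos_of_pos (by linarith [hs.1]) _)]
    calc (1 + s) ^ (-γ) ≤ (1 + s) ^ |γ| :=
          rpow_le_rpow_of_exponent_le (by linarith [hs.1]) (neg_le_abs γ)
      _ ≤ (1 + t) ^ |γ| := rpow_le_rpow (by linarith [hs.1]) (by linarith [hs.2]) (abs_nonneg γ)
  · simp [indicator_of_notMem hy]

theorem kernelY_mul_ballForcing_nonneg (hGpos : ∀ ξ : Euc N, ξ ≠ 0 → 0 < G ξ) (γ : ℝ)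
    {x y : Euc N} (hx : 1 < ‖x‖) {τ s : ℝ} (hτ : 0 < τ) (hs : 0 < s) :
    0 ≤ kernelY N α β G (x - y) τ * ballForcing N γ y s := by
  by_cases hy : y ∈ Metric.ball 0 1
  · have hxy : x - y ≠ 0 := sub_ne_zero.2 fun h => by
      rw [mem_ball_zero_iff, ← h] at hy
      linarith
    rw [ballForcing, indicator_of_mem hy]
    exact mul_nonneg (kernelY_pos hGpos hxy hτ).le (rpow_nonneg (by linarith) _)
  · simp [ballForcing, indicator_of_notMem hy]

theorem le_integral_kernelY_mul_ballForcing {c : ℝ} (hc : 0 ≤ c)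
    (hGcont : ContinuousOn G {0}ᶜ) (hGlow : ∀ ξ : Euc N, ξ ≠ 0 → ‖ξ‖ ≤ 1 → c ≤ G ξ) (γ : ℝ)
    {x : Euc N} (hx : 1 < ‖x‖) {t s : ℝ} (ht : 1 ≤ t) (hs₁ : t / 2 ≤ s) (hs₂ : s < t)
    (hxs : ‖x‖ + 1 ≤ (t - s) ^ thetaV α β) :
    c * 2 ^ (-|γ|) * volume.real (Metric.ball (0 : Euc N) 1) * t ^ (-γ) *
        (t - s) ^ (-sigmaStar N α β) ≤
      ∫ y, kernelY N α β G (x - y) (t - s) * ballForcing N γ y s := by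
  have hind : (fun y => kernelY N α β G (x - y) (t - s) * ballForcing N γ y s) =
      (Metric.ball 0 1).indicator fun y => kernelY N α β G (x - y) (t - s) * (1 + s) ^ (-γ) :=
    funext fun y => (indicator_mul_right _ (fun y => kernelY N α β G (x - y) (t - s)) _).symm
  rw [hind, integral_indicator measurableSet_ball, integral_mul_const]
  have hball := mul_measureReal_le_setIntegral_kernelY hGcont hGlow hx (sub_pos.2 hs₂) hxs
  have hlow : 0 ≤ c * (t - s) ^ (-sigmaStar N α β) * volume.real (Metric.ball (0 : Euc N) 1) := by
    have := rpow_nonneg (sub_pos.2 hs₂).le (-sigmaStar N α β)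
    positivity
  calc c * 2 ^ (-|γ|) * volume.real (Metric.ball (0 : Euc N) 1) * t ^ (-γ) *
        (t - s) ^ (-sigmaStar N α β)
      = c * (t - s) ^ (-sigmaStar N α β) * volume.real (Metric.ball (0 : Euc N) 1) *
          (2 ^ (-|γ|) * t ^ (-γ)) := by ring
    _ ≤ _ := mul_le_mul hball
        (two_rpow_neg_abs_mul_rpow_le γ (by linarith) (by linarith) (by linarith))
        (by positivity) (hlow.trans hball)

theorem mul_intervalIntegral_rpow_le_mildSol {C c : ℝ} (hα : 0 < α) (hβ : 0 < β)
    (hGcont : ContinuousOn G {0}ᶜ) (hGpos : ∀ ξ : Euc N, ξ ≠ 0 → 0 < G ξ)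
    (hGout : ∀ ξ : Euc N, 1 ≤ ‖ξ‖ → G ξ ≤ C * ‖ξ‖ ^ (-((N : ℝ) + 2 * β)))
    (hc : 0 ≤ c) (hGlow : ∀ ξ : Euc N, ξ ≠ 0 → ‖ξ‖ ≤ 1 → c ≤ G ξ) (γ : ℝ)
    {x : Euc N} (hx : 1 < ‖x‖) {t a b : ℝ} (ht : 1 ≤ t) (ha : 0 < a)
    (hxa : ‖x‖ + 1 ≤ a ^ thetaV α β) (hab : a ≤ b) (hbt : b ≤ t / 2) :
    c * 2 ^ (-|γ|) * volume.real (Metric.ball (0 : Euc N) 1) * t ^ (-γ) *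
        ∫ τ in a..b, τ ^ (-sigmaStar N α β) ≤ mildSol N α β G (ballForcing N γ) x t := by
  have hθ : 0 ≤ thetaV α β := (div_pos hα (by positivity)).le
  set g := fun s => ∫ y, kernelY N α β G (x - y) (t - s) * ballForcing N γ y s
  have hint : IntegrableOn g (Ioo 0 t) :=
    (integrable_kernelY_mul_forcing hα hβ hGcont hGpos hGout (measurable_ballForcing γ)
      (by linarith) hx fun s hs y => abs_ballForcing_le γ hs y).integral_prod_left
  have hsub : Icc (t - b) (t - a) ⊆ Ioo 0 t := fun s hs =>
    ⟨by linarith [hs.1], by linarith [hs.2]⟩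
  set K := c * 2 ^ (-|γ|) * volume.real (Metric.ball (0 : Euc N) 1) * t ^ (-γ)
  calc K * ∫ τ in a..b, τ ^ (-sigmaStar N α β)
      = ∫ s in Icc (t - b) (t - a), K * (t - s) ^ (-sigmaStar N α β) := by
        rw [integral_Icc_eq_integral_Ioc, ← intervalIntegral.integral_of_le (by linarith),
          intervalIntegral.integral_const_mul,
          intervalIntegral.integral_comp_sub_left (fun τ => τ ^ (-sigmaStar N α β)),
          sub_sub_cancel, sub_sub_cancel]
    _ ≤ ∫ s in Icc (t - b) (t - a), g s := by
        refine setIntegral_mono_on ?_ (hint.mono_set hsub) measurableSet_Icc fun s hs => ?_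
        · refine ContinuousOn.integrableOn_compact isCompact_Icc (continuousOn_const.mul ?_)
          exact ContinuousOn.rpow_const (f := fun s => t - s) (by fun_prop) fun s hs =>
            Or.inl (sub_pos.2 (by linarith [hs.2])).ne'
        · exact le_integral_kernelY_mul_ballForcing hc hGcont hGlow γ hx ht
            (by linarith [hs.1]) (by linarith [hs.2])
            (hxa.trans (rpow_le_rpow ha.le (by linarith [hs.2]) hθ))
    _ ≤ ∫ s in Ioo 0 t, g s := by
        refine setIntegral_mono_set hint ?_ hsub.eventuallyLE
        refine (ae_restrict_iff' measurableSet_Ioo).2 (ae_of_all _ fun s hs => ?_)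
        exact integral_nonneg fun y =>
          kernelY_mul_ballForcing_nonneg hGpos γ hx (by linarith [hs.2]) hs.1

theorem exists_mul_log_le_mildSol_ballForcing {C c₁ : ℝ} (hα : 0 < α) (hβ : 0 < β)
    (hGcont : ContinuousOn G {0}ᶜ) (hGpos : ∀ ξ : Euc N, ξ ≠ 0 → 0 < G ξ)
    (hGout : ∀ ξ : Euc N, 1 ≤ ‖ξ‖ → G ξ ≤ C * ‖ξ‖ ^ (-((N : ℝ) + 2 * β)))
    (hc₁ : 0 < c₁) (hGlow : ∀ ξ : Euc N, ξ ≠ 0 → ‖ξ‖ ≤ 1 → c₁ ≤ G ξ) (γ : ℝ)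
    (hN : (N : ℝ) = 2 * β) :
    ∃ c, 0 < c ∧ ∀ t, 1 ≤ t → ∀ x : Euc N, 1 < ‖x‖ →
      ‖x‖ ≤ 4 ^ (-(1 + thetaV α β)) * t ^ thetaV α β →
      c * t ^ (-γ) * log (t ^ thetaV α β / ‖x‖) ≤ mildSol N α β G (ballForcing N γ) x t := by
  have hθ : 0 < thetaV α β := div_pos hα (by positivity)
  set V := volume.real (Metric.ball (0 : Euc N) 1)
  have hV : 0 < V :=
    ENNReal.toReal_pos (Metric.measure_ball_pos volume 0 one_pos).ne' measure_ball_lt_top.ne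
  refine ⟨c₁ * 2 ^ (-|γ|) * V / (2 * thetaV α β), by positivity, fun t ht x hx hxt => ?_⟩
  set a := (2 * ‖x‖) ^ (thetaV α β)⁻¹
  have ha : 0 < a := by positivity
  have hat := rpow_inv_le_div_four hθ (by linarith) (norm_nonneg x) hxt
  have hxa : ‖x‖ + 1 ≤ a ^ thetaV α β := by
    rw [rpow_inv_rpow (by positivity) hθ.ne']
    linarith
  have hu := mul_intervalIntegral_rpow_le_mildSol hα hβ hGcont hGpos hGout hc₁.le hGlow γ hx ht
    ha hxa (by linarith) le_rfl
  simp_rw [sigmaStar_eq_one hβ.ne' hN, rpow_neg_one] at hu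
  rw [integral_inv_of_pos ha (by linarith)] at hu
  calc c₁ * 2 ^ (-|γ|) * V / (2 * thetaV α β) * t ^ (-γ) * log (t ^ thetaV α β / ‖x‖)
      = c₁ * 2 ^ (-|γ|) * V * t ^ (-γ) * (log (t ^ thetaV α β / ‖x‖) / (2 * thetaV α β)) := by
        ring
    _ ≤ c₁ * 2 ^ (-|γ|) * V * t ^ (-γ) * log (t / 2 / a) := by
        gcongr
        exact log_div_two_mul_le_log hθ (by linarith) (by linarith) hxt
    _ ≤ _ := hu

theorem exists_mul_rpow_le_mildSol_ballForcing {C c₁ : ℝ} (hα : 0 < α) (hβ : 0 < β)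
    (hGcont : ContinuousOn G {0}ᶜ) (hGpos : ∀ ξ : Euc N, ξ ≠ 0 → 0 < G ξ)
    (hGout : ∀ ξ : Euc N, 1 ≤ ‖ξ‖ → G ξ ≤ C * ‖ξ‖ ^ (-((N : ℝ) + 2 * β)))
    (hc₁ : 0 < c₁) (hGlow : ∀ ξ : Euc N, ξ ≠ 0 → ‖ξ‖ ≤ 1 → c₁ ≤ G ξ) (γ : ℝ)
    (hN : 2 * β ≤ N) :
    ∃ c, 0 < c ∧ ∀ t, 1 ≤ t → ∀ x : Euc N, 1 < ‖x‖ →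
      ‖x‖ ≤ 4 ^ (-(1 + thetaV α β)) * t ^ thetaV α β →
      c * t ^ (-γ) * ‖x‖ ^ (2 * β - N) ≤ mildSol N α β G (ballForcing N γ) x t := by
  have hθ : 0 < thetaV α β := div_pos hα (by positivity)
  have hσ : 0 ≤ sigmaStar N α β := by linarith [one_le_sigmaStar hα.le hβ hN]
  set V := volume.real (Metric.ball (0 : Euc N) 1)
  have hV : 0 < V :=
    ENNReal.toReal_pos (Metric.measure_ball_pos volume 0 one_pos).ne' measure_ball_lt_top.ne
  refine ⟨c₁ * 2 ^ (-|γ|) * V * (2 ^ (-sigmaStar N α β) * 2 ^ (2 * β - N)), by positivity,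
    fun t ht x hx hxt => ?_⟩
  set a := (2 * ‖x‖) ^ (thetaV α β)⁻¹
  have ha : 0 < a := by positivity
  have hat := rpow_inv_le_div_four hθ (by linarith) (norm_nonneg x) hxt
  have hxa : ‖x‖ + 1 ≤ a ^ thetaV α β := by
    rw [rpow_inv_rpow (by positivity) hθ.ne']
    linarith
  have hu := mul_intervalIntegral_rpow_le_mildSol hα hβ hGcont hGpos hGout hc₁.le hGlow γ hx ht
    ha hxa (b := 2 * a) (by linarith) (by linarith)
  have hpow : a * (2 * a) ^ (-sigmaStar N α β) =
      2 ^ (-sigmaStar N α β) * 2 ^ (2 * β - N) * ‖x‖ ^ (2 * β - N) := by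
    have hsub : a * a ^ (-sigmaStar N α β) = a ^ (1 - sigmaStar N α β) := by
      rw [sub_eq_add_neg, rpow_add ha, rpow_one]
    rw [mul_rpow two_pos.le ha.le, mul_left_comm, hsub, ← rpow_mul (by positivity),
      mul_comm (thetaV α β)⁻¹, one_sub_sigmaStar_mul_thetaV_inv hα.ne' hβ.ne',
      mul_rpow two_pos.le (norm_nonneg x)]
    ring
  calc c₁ * 2 ^ (-|γ|) * V * (2 ^ (-sigmaStar N α β) * 2 ^ (2 * β - N)) * t ^ (-γ) *
        ‖x‖ ^ (2 * β - N)
      = c₁ * 2 ^ (-|γ|) * V * t ^ (-γ) * (a * (2 * a) ^ (-sigmaStar N α β)) := by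
        rw [hpow]
        ring
    _ ≤ c₁ * 2 ^ (-|γ|) * V * t ^ (-γ) * ∫ τ in a..2 * a, τ ^ (-sigmaStar N α β) := by
        gcongr
        exact mul_rpow_le_intervalIntegral_rpow ha hσ
    _ ≤ _ := hu

end Duhamel

theorem pointwise_lower_intermediate_general
    (N : ℕ) (α β : ℝ) (hα0 : 0 < α)
    (hβ0 : 0 < β) (hNβ : (N : ℝ) ≤ 4 * β)
    (G : Euc N → ℝ) (C₁ : ℝ)
    (hGcont : ContinuousOn G {(0 : Euc N)}ᶜ)
    (hGpos : ∀ ξ : Euc N, ξ ≠ 0 → 0 < G ξ)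
    (hGout : ∀ ξ : Euc N, 1 ≤ ‖ξ‖ → G ξ ≤ C₁ * ‖ξ‖ ^ (-((N : ℝ) + 2 * β)))
    (c₁ : ℝ) (hc₁ : 0 < c₁)
    (hGlow₁ : (N : ℝ) < 4 * β → ∀ ξ : Euc N, ξ ≠ 0 → ‖ξ‖ ≤ 1 → c₁ ≤ G ξ)
    (hGlow₂ : (N : ℝ) = 4 * β → ∀ ξ : Euc N, ξ ≠ 0 → ‖ξ‖ ≤ 1 →
      c₁ * (1 + |Real.log ‖ξ‖|) ≤ G ξ)
    (γ : ℝ) (h2β : 2 * β ≤ (N : ℝ)) :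
    ∃ c δ T : ℝ, 0 < c ∧ 0 < δ ∧ δ < 1 ∧ 2 ≤ T ∧ ∀ t : ℝ, T ≤ t →
      ∀ x : Euc N, 1 < ‖x‖ → ‖x‖ ≤ δ * t ^ thetaV α β →
      ((N : ℝ) = 2 * β →
        c * t ^ (-γ) * Real.log (t ^ thetaV α β / ‖x‖) ≤ mildSol N α β G (fun (y : Euc N) (s : ℝ) => Set.indicator (Metric.ball (0 : Euc N) 1) (fun _ => (1 + s) ^ (-γ)) y) x t) ∧
      (2 * β < (N : ℝ) →
        c * t ^ (-γ) * ‖x‖ ^ (2 * β - (N : ℝ)) ≤ mildSol N α β G (fun (y : Euc N) (s : ℝ) => Set.indicator (Metric.ball (0 : Euc N) 1) (fun _ => (1 + s) ^ (-γ)) y) x t) := by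
  have hθ : 0 < thetaV α β := div_pos hα0 (by positivity)
  have hGlow : ∀ ξ : Euc N, ξ ≠ 0 → ‖ξ‖ ≤ 1 → c₁ ≤ G ξ := by
    rcases hNβ.lt_or_eq with hlt | heq
    · exact hGlow₁ hlt
    · exact fun ξ hξ hξ1 => (le_mul_of_one_le_right hc₁.le
        (le_add_of_nonneg_right (abs_nonneg _))).trans (hGlow₂ heq ξ hξ hξ1)
  have hδ : (0 : ℝ) < 4 ^ (-(1 + thetaV α β)) := by positivity
  have hδ1 : (4 : ℝ) ^ (-(1 + thetaV α β)) < 1 :=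
    rpow_lt_one_of_one_lt_of_neg (by norm_num) (by linarith)
  rcases h2β.eq_or_lt with hcrit | hsuper
  · obtain ⟨c, hc, hlow⟩ := exists_mul_log_le_mildSol_ballForcing hα0 hβ0 hGcont hGpos hGout
      hc₁ hGlow γ hcrit.symm
    exact ⟨c, _, 2, hc, hδ, hδ1, le_rfl, fun t ht x hx hxt =>
      ⟨fun _ => hlow t (by linarith) x hx hxt, fun h => absurd hcrit h.ne⟩⟩
  · obtain ⟨c, hc, hlow⟩ := exists_mul_rpow_le_mildSol_ballForcing hα0 hβ0 hGcont hGpos hGout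
      hc₁ hGlow γ h2β
    exact ⟨c, _, 2, hc, hδ, hδ1, le_rfl, fun t ht x hx hxt =>
      ⟨fun h => absurd h hsuper.ne', fun _ => hlow t (by linarith) x hx hxt⟩⟩

theorem pointwise_lower_intermediate
    (N : ℕ) (hN : 1 ≤ N) (α β : ℝ) (hα0 : 0 < α) (hα1 : α < 1)
    (hβ0 : 0 < β) (hβ1 : β ≤ 1) (hNβ : (N : ℝ) ≤ 4 * β)
    (G : Euc N → ℝ) (C₁ : ℝ) (hC₁ : 0 < C₁)
    (hGcont : ContinuousOn G {(0 : Euc N)}ᶜ)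
    (hGpos : ∀ ξ : Euc N, ξ ≠ 0 → 0 < G ξ)
    (hGin₁ : (N : ℝ) < 4 * β → ∀ ξ : Euc N, ξ ≠ 0 → ‖ξ‖ ≤ 1 → G ξ ≤ C₁)
    (hGin₂ : (N : ℝ) = 4 * β → ∀ ξ : Euc N, ξ ≠ 0 → ‖ξ‖ ≤ 1 →
      G ξ ≤ C₁ * (1 + |Real.log ‖ξ‖|))
    (hGout : ∀ ξ : Euc N, 1 ≤ ‖ξ‖ → G ξ ≤ C₁ * ‖ξ‖ ^ (-((N : ℝ) + 2 * β)))
    (c₁ : ℝ) (hc₁ : 0 < c₁)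
    (hGlow₁ : (N : ℝ) < 4 * β → ∀ ξ : Euc N, ξ ≠ 0 → ‖ξ‖ ≤ 1 → c₁ ≤ G ξ)
    (hGlow₂ : (N : ℝ) = 4 * β → ∀ ξ : Euc N, ξ ≠ 0 → ‖ξ‖ ≤ 1 →
      c₁ * (1 + |Real.log ‖ξ‖|) ≤ G ξ)
    (γ : ℝ) (h2β : 2 * β ≤ (N : ℝ)) :
    ∃ c δ T : ℝ, 0 < c ∧ 0 < δ ∧ δ < 1 ∧ 2 ≤ T ∧ ∀ t : ℝ, T ≤ t →
      ∀ x : Euc N, 1 < ‖x‖ → ‖x‖ ≤ δ * t ^ thetaV α β →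
      ((N : ℝ) = 2 * β →
        c * t ^ (-γ) * Real.log (t ^ thetaV α β / ‖x‖) ≤ mildSol N α β G (fun (y : Euc N) (s : ℝ) => Set.indicator (Metric.ball (0 : Euc N) 1) (fun _ => (1 + s) ^ (-γ)) y) x t) ∧
      (2 * β < (N : ℝ) →
        c * t ^ (-γ) * ‖x‖ ^ (2 * β - (N : ℝ)) ≤ mildSol N α β G (fun (y : Euc N) (s : ℝ) => Set.indicator (Metric.ball (0 : Euc N) 1) (fun _ => (1 + s) ^ (-γ)) y) x t) :=
  pointwise_lower_intermediate_general N α β hα0 hβ0 hNβ G C₁ hGcont hGpos hGout c₁ hc₁ hGlow₁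
    hGlow₂ γ h2β
end
end
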